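/- Define the star-Motzkin charge of a word w over the alphabet {0, (, ), *} as Q(w) = Σ_i [w_i = *] · 2^(h_i(w)), where h_i(w) = #{j < i : w_j = ( } − #{j < i : w_j = ) }. Then Q is invariant under each of the local rewriting rules: ( 0 ↔ 0 (, ) 0 ↔ 0 ), ( ) ↔ 0 0, ( * 0 ↔ * * (, 0 * ) ↔ ) * *, and 0 * ↔ * 0. -/
import Mathlib


/-- The alphabet {0, (, ), *} of the star-Motzkin chain. -/
inductive SMLetter : Type
  | zero | op | cl | star
deriving DecidableEq

/-- The height (nesting level) just before position `i`: number of `(` minus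
number of `)` among the first `i` letters. -/
def smHeight (w : List SMLetter) (i : ℕ) : ℤ :=
  ((w.take i).count SMLetter.op : ℤ) - ((w.take i).count SMLetter.cl : ℤ)

/-- The star-Motzkin charge Q(w) = Σ_{i : w_i = *} 2^{h_i(w)}, valued in ℚ. -/
def smCharge (w : List SMLetter) : ℚ :=
  ∑ i ∈ Finset.range w.length,
    if w.getD i SMLetter.zero = SMLetter.star then (2 : ℚ) ^ (smHeight w i) else 0

/-- Height change contributed by a single letter. -/
def smDelta (x : SMLetter) : ℤ :=
  (if x = SMLetter.op then 1 else 0) - (if x = SMLetter.cl then 1 else 0)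

/-- Net height change of a word. -/
def smNet (w : List SMLetter) : ℤ :=
  (w.count SMLetter.op : ℤ) - (w.count SMLetter.cl : ℤ)

lemma smNet_nil : smNet [] = 0 := rfl

lemma smNet_cons (x : SMLetter) (w : List SMLetter) :
    smNet (x :: w) = smDelta x + smNet w := by
  simp [smNet, smDelta, List.count_cons]
  cases x <;> simp <;> ring

lemma smHeight_cons (x : SMLetter) (w : List SMLetter) (i : ℕ) :
    smHeight (x :: w) (i + 1) = smDelta x + smHeight w i := by
  simp [smHeight, smDelta, List.count_cons]
  cases x <;> simp <;> ring

lemma smCharge_nil : smCharge [] = 0 := rfl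

lemma smCharge_cons (x : SMLetter) (w : List SMLetter) :
    smCharge (x :: w) =
      (if x = SMLetter.star then 1 else 0) + (2 : ℚ) ^ (smDelta x) * smCharge w := by
  unfold smCharge
  rw [List.length_cons, Finset.sum_range_succ']
  have h0 : smHeight (x :: w) 0 = 0 := by simp [smHeight]
  simp only [h0, List.getD_cons_succ, List.getD_cons_zero, zpow_zero, smHeight_cons,
    Finset.mul_sum]
  rw [add_comm]
  congr 1
  refine Finset.sum_congr rfl fun i _ => ?_
  split <;> simp [zpow_add₀ (two_ne_zero (α := ℚ))]

lemma smCharge_append (a b : List SMLetter) :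
    smCharge (a ++ b) = smCharge a + (2 : ℚ) ^ (smNet a) * smCharge b := by
  induction a with
  | nil => simp [smCharge_nil, smNet_nil]
  | cons x a ih =>
    simp only [List.cons_append, smCharge_cons, ih, smNet_cons,
      zpow_add₀ (two_ne_zero (α := ℚ))]
    ring

/-- The local rewriting rules of the star-Motzkin model:
`( 0 ↔ 0 (`, `) 0 ↔ 0 )`, `( ) ↔ 0 0`, `( * 0 ↔ * * (`, `0 * ) ↔ ) * *`, `0 * ↔ * 0`. -/
def SMRules : List (List SMLetter × List SMLetter) :=
  [([.op, .zero], [.zero, .op]),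
   ([.cl, .zero], [.zero, .cl]),
   ([.op, .cl], [.zero, .zero]),
   ([.op, .star, .zero], [.star, .star, .op]),
   ([.zero, .star, .cl], [.cl, .star, .star]),
   ([.zero, .star], [.star, .zero])]

/-- A single rewriting step: replace a contiguous subword matching one side of a
rule by the other side. -/
def SMStep (w w' : List SMLetter) : Prop :=
  ∃ u v l r : List SMLetter,
    (((l, r) ∈ SMRules) ∨ ((r, l) ∈ SMRules)) ∧
    w = u ++ l ++ v ∧ w' = u ++ r ++ v

theorem star_motzkin_charge_conserved (w w' : List SMLetter) (h : SMStep w w') :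
    smCharge w = smCharge w' := by
  obtain ⟨u, v, l, r, hmem, hw, hw'⟩ := h
  subst hw hw'
  have key : smCharge l = smCharge r ∧ smNet l = smNet r := by
    simp only [SMRules, List.mem_cons, List.mem_singleton, Prod.mk.injEq,
      List.not_mem_nil, or_false] at hmem
    rcases hmem with (⟨hl, hr⟩|⟨hl, hr⟩|⟨hl, hr⟩|⟨hl, hr⟩|⟨hl, hr⟩|⟨hl, hr⟩)|
      (⟨hr, hl⟩|⟨hr, hl⟩|⟨hr, hl⟩|⟨hr, hl⟩|⟨hr, hl⟩|⟨hr, hl⟩) <;>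
      subst hl hr <;>
      constructor <;>
      simp [smCharge_cons, smCharge_nil, smNet_cons, smNet_nil, smDelta,
        zpow_add₀ (two_ne_zero (α := ℚ))] <;> ring
  simp only [List.append_assoc, smCharge_append, key.1, key.2]
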